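/- Proposition 7.3: There exists a unique homomorphism of unital $\mathbb{C}$-algebras $\phi_0:\mathcal{A}_{0+}\to\overline{A}_1$ satisfying $\phi_0(\alpha_{ij})=s_i-s_j$ for all $i\neq j$, and there exists a unique homomorphism of unital $\mathbb{C}$-algebras $\phi:\mathcal{A}_{0+}\to A_1$ satisfying $\phi(\alpha_{ij})=s_i-s_j$ for all $i\neq j$. -/
import Mathlib


/-!
Proposition 7.3. Let `M` be a Coxeter matrix on a finite set `I` (Mathlib convention:
`M i j = 0` encodes `m_{ij} = ∞`). Let `𝒜_{0+}` be the quotient of the free `ℂ`-algebra on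
generators `α_{ij}` (`i ≠ j`) by `α_{ij} + α_{ji} = 0`, `α_{ij} + α_{jk} + α_{ki} = 0`,
`α_{ij}^{m_{ij}} = 0` (`m_{ij} < ∞`); let `A₁` be the quotient of the free `ℂ`-algebra on
`(s_i)` by `s_i² = 1`, `(s_is_j - 1)^{m_{ij}} = 0`; and let `Ā₁` be the quotient by
`s_i² = 0`, `π_{m_{ij}}(s_i,s_j) = (-1)^{m_{ij}+1}π_{m_{ij}}(s_j,s_i)`. Then there exist
unique unital `ℂ`-algebra homomorphisms `φ₀ : 𝒜_{0+} → Ā₁` and `φ : 𝒜_{0+} → A₁`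
with `φ₀(α_{ij}) = s_i - s_j` and `φ(α_{ij}) = s_i - s_j`.
-/

noncomputable section

namespace EvenAdd

variable {I : Type*} [DecidableEq I]

/-- Index type for the generators `α_{ij}`, `i ≠ j`. -/
abbrev Gens (I : Type*) := {p : I × I // p.1 ≠ p.2}

/-- The generator `α_{ij}` of the free algebra. -/
def agen (i j : I) (h : i ≠ j) : FreeAlgebra ℂ (Gens I) := FreeAlgebra.ι ℂ ⟨(i, j), h⟩

/-- The defining relations of `𝒜_{0+}`: `α_{ij} + α_{ji} = 0`,
`α_{ij} + α_{jk} + α_{ki} = 0`, and `α_{ij}^{m_{ij}} = 0` when `m_{ij} < ∞`. -/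
inductive Rel (M : CoxeterMatrix I) :
    FreeAlgebra ℂ (Gens I) → FreeAlgebra ℂ (Gens I) → Prop
  | anti (i j : I) (h : i ≠ j) : Rel M (agen i j h + agen j i h.symm) 0
  | triangle (i j k : I) (hij : i ≠ j) (hjk : j ≠ k) (hki : k ≠ i) :
      Rel M (agen i j hij + agen j k hjk + agen k i hki) 0
  | nil (i j : I) (h : i ≠ j) (hm : M i j ≠ 0) : Rel M (agen i j h ^ (M i j)) 0

/-- The algebra `𝒜_{0+}`. -/
abbrev A0 (M : CoxeterMatrix I) : Type _ := RingQuot (Rel M)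

/-- The quotient map. -/
def mk (M : CoxeterMatrix I) : FreeAlgebra ℂ (Gens I) →ₐ[ℂ] A0 M :=
  RingQuot.mkAlgHom ℂ _

/-- Given a starting index `prev` and a list `[i₁, …, i_n]`, the product
`α_{prev,i₁} α_{i₁i₂} ⋯ α_{i_{n-1}i_n}` (junk value `0` if two consecutive indices coincide,
which does not occur for reduced words). -/
def bProd (M : CoxeterMatrix I) : I → List I → A0 M
  | _, [] => 1
  | prev, i :: rest =>
      (if h : prev ≠ i then mk M (agen prev i h) else 0) * bProd M i rest

/-- The span of `1` and all products of at most `n` generators `α_{ij}` in `𝒜_{0+}`: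
the `n`-th piece of the degree filtration. -/
def filtration (M : CoxeterMatrix I) (n : ℕ) : Submodule ℂ (A0 M) :=
  Submodule.span ℂ
    {z : A0 M | ∃ l : List (Gens I), l.length ≤ n ∧
      z = (l.map fun g => mk M (FreeAlgebra.ι ℂ g)).prod}

end EvenAdd
namespace TargetAlgs

variable {I : Type*}

/-- The alternating product `x * y * x * y * ⋯` with exactly `m` factors, starting with `x`. -/
def altProd {A : Type*} [Monoid A] (x y : A) : ℕ → A
  | 0 => 1
  | m + 1 => x * altProd y x m

/-- The defining relations of `A₁`: `s_i² = 1` and `(s_i s_j - 1)^{m_{ij}} = 0`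
(`m_{ij} < ∞`). -/
inductive Rel1 (M : CoxeterMatrix I) : FreeAlgebra ℂ I → FreeAlgebra ℂ I → Prop
  | sq (i : I) : Rel1 M (FreeAlgebra.ι ℂ i * FreeAlgebra.ι ℂ i) 1
  | unip (i j : I) (h : i ≠ j) (hm : M i j ≠ 0) :
      Rel1 M ((FreeAlgebra.ι ℂ i * FreeAlgebra.ι ℂ j - 1) ^ (M i j)) 0

/-- The algebra `A₁`. -/
abbrev A1 (M : CoxeterMatrix I) : Type _ := RingQuot (Rel1 M)

/-- The image of the generator `s_i` in `A₁`. -/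
def σ1 (M : CoxeterMatrix I) (i : I) : A1 M :=
  RingQuot.mkAlgHom ℂ (Rel1 M) (FreeAlgebra.ι ℂ i)

/-- The defining relations of `Ā₁`: `s_i² = 0` and
`π_{m_{ij}}(s_i,s_j) = (-1)^{m_{ij}+1} π_{m_{ij}}(s_j,s_i)` (`m_{ij} < ∞`). -/
inductive RelBar (M : CoxeterMatrix I) : FreeAlgebra ℂ I → FreeAlgebra ℂ I → Prop
  | sq (i : I) : RelBar M (FreeAlgebra.ι ℂ i * FreeAlgebra.ι ℂ i) 0
  | braid (i j : I) (h : i ≠ j) (hm : M i j ≠ 0) :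
      RelBar M (altProd (FreeAlgebra.ι ℂ i) (FreeAlgebra.ι ℂ j) (M i j))
        ((-1 : FreeAlgebra ℂ I) ^ (M i j + 1) *
          altProd (FreeAlgebra.ι ℂ j) (FreeAlgebra.ι ℂ i) (M i j))

/-- The algebra `Ā₁`. -/
abbrev A1bar (M : CoxeterMatrix I) : Type _ := RingQuot (RelBar M)

/-- The image of the generator `s_i` in `Ā₁`. -/
def σbar (M : CoxeterMatrix I) (i : I) : A1bar M :=
  RingQuot.mkAlgHom ℂ (RelBar M) (FreeAlgebra.ι ℂ i)

/-- The subalgebra `B ⊆ Ā₁` generated by the elements `s_i - s_j`. -/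
def Bsub (M : CoxeterMatrix I) : Subalgebra ℂ (A1bar M) :=
  Algebra.adjoin ℂ {z : A1bar M | ∃ i j : I, z = σbar M i - σbar M j}

end TargetAlgs

/-! ### Auxiliary lemmas -/

section Aux
open TargetAlgs

variable {R : Type*} [Ring R]

private lemma key1 (a b : R) (ha : a*a = 1) (hb : b*b = 1) (k : ℕ) :
    (a-b)^(2*k) = (-1:R)^k * (a*b-1)^(2*k) * (b*a)^k ∧
    (a-b)^(2*k+1) = (-1:R)^k * (a*b-1)^(2*k+1) * (b*a)^k * b := by
  have habba : a*b*(b*a) = 1 := by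
    calc a*b*(b*a) = a*(b*b)*a := by noncomm_ring
    _ = 1 := by rw [hb, mul_one, ha]
  have hbaab : b*a*(a*b) = 1 := by
    calc b*a*(a*b) = b*(a*a)*b := by noncomm_ring
    _ = 1 := by rw [ha, mul_one, hb]
  have hC : Commute (a*b-1) (b*a) := by
    show (a*b-1) * (b*a) = (b*a) * (a*b-1)
    noncomm_ring [habba, hbaab]
  have hub : (a*b-1) * b = a - b := by
    have : a*b*b = a := by rw [mul_assoc, hb, mul_one]
    noncomm_ring [this]
  have hba : b * (a - b) = b*a - 1 := by noncomm_ring [hb]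
  have hv : b*a - 1 = -((a*b-1)*(b*a)) := by noncomm_ring [habba]
  induction k with
  | zero =>
    refine ⟨by simp, by simpa using hub.symm⟩
  | succ k ih =>
    obtain ⟨ih1, ih2⟩ := ih
    have hcw : (b*a)^k * (a*b-1) = (a*b-1) * (b*a)^k := ((hC.pow_right k).eq).symm
    have hcw' : (b*a)^(k+1) * (a*b-1) = (a*b-1) * (b*a)^(k+1) := ((hC.pow_right (k+1)).eq).symm
    have step1 : (a-b)^(2*(k+1)) = (-1:R)^(k+1) * (a*b-1)^(2*(k+1)) * (b*a)^(k+1) := by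
      rw [show 2*(k+1) = (2*k+1)+1 from by omega, pow_succ, ih2]
      rw [mul_assoc _ b (a-b), hba, hv]
      rw [pow_succ (-1:R) k, pow_succ (a*b-1) (2*k+1), pow_succ (b*a) k]
      simp only [mul_assoc, mul_neg, neg_mul, mul_one, neg_inj]
      rw [← mul_assoc ((b*a)^k) (a*b-1) (b*a), hcw]
      simp only [mul_assoc]
    refine ⟨step1, ?_⟩
    rw [pow_succ, step1, ← hub]
    rw [pow_succ (a*b-1) (2*(k+1))]
    simp only [mul_assoc]
    rw [← mul_assoc ((b*a)^(k+1)) (a*b-1) b, hcw']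
    simp only [mul_assoc]

private lemma key1' (a b : R) (ha : a*a = 1) (hb : b*b = 1) (m : ℕ)
    (hu : (a*b-1)^m = 0) : (a-b)^m = 0 := by
  rcases Nat.even_or_odd m with ⟨k, hk⟩ | ⟨k, hk⟩
  · have := (key1 a b ha hb k).1
    rw [show 2*k = m from by omega, hu] at this
    simpa using this
  · have := (key1 a b ha hb k).2
    rw [show 2*k+1 = m from by omega, hu] at this
    simpa using this

private lemma key2 (x y : R) (hx : x*x = 0) (hy : y*y = 0) :
    ∀ m : ℕ, 1 ≤ m → (x - y)^m
      = (-1:R)^(m/2) * altProd x y m + (-1:R)^((m+1)/2) * altProd y x m := by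
  intro m
  induction m with
  | zero => omega
  | succ m ih =>
    intro _
    rcases Nat.eq_zero_or_pos m with hm | hm
    · subst hm; simp [altProd, sub_eq_add_neg]
    · obtain ⟨m', rfl⟩ : ∃ m', m = m' + 1 := ⟨m - 1, by omega⟩
      rw [pow_succ', ih hm]
      have hxp : x * altProd x y (m'+1) = 0 := by
        show x * (x * altProd y x m') = 0
        rw [← mul_assoc, hx, zero_mul]
      have hyp : y * altProd y x (m'+1) = 0 := by
        show y * (y * altProd x y m') = 0
        rw [← mul_assoc, hy, zero_mul]
      have e1 : (x - y) * altProd x y (m'+1) = -altProd y x (m'+2) := by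
        rw [sub_mul, hxp, zero_sub]; rfl
      have e2 : (x - y) * altProd y x (m'+1) = altProd x y (m'+2) := by
        rw [sub_mul, hyp, sub_zero]; rfl
      have c1 : (x-y) * ((-1:R)^((m'+1)/2) * altProd x y (m'+1))
          = (-1:R)^((m'+1)/2) * ((x-y) * altProd x y (m'+1)) := by
        rw [← mul_assoc, ← ((Commute.neg_one_left (x-y)).pow_left _).eq, mul_assoc]
      have c2 : (x-y) * ((-1:R)^((m'+1+1)/2) * altProd y x (m'+1))
          = (-1:R)^((m'+1+1)/2) * ((x-y) * altProd y x (m'+1)) := by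
        rw [← mul_assoc, ← ((Commute.neg_one_left (x-y)).pow_left _).eq, mul_assoc]
      rw [mul_add, c1, c2, e1, e2]
      rw [show (m'+1+1+1)/2 = (m'+1)/2 + 1 from by omega]
      rw [show (m'+2 : ℕ) = m'+1+1 from rfl]
      rw [pow_succ]
      simp only [mul_neg_one, mul_neg, neg_mul, mul_one]
      rw [add_comm]

private lemma map_altProd {A B : Type*} [Semiring A] [Semiring B] [Algebra ℂ A] [Algebra ℂ B]
    (f : A →ₐ[ℂ] B) (x y : A) :
    ∀ m, f (altProd x y m) = altProd (f x) (f y) m := by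
  intro m
  induction m generalizing x y with
  | zero => simp [altProd]
  | succ m ih => simp only [altProd, map_mul, ih]

end Aux

section Facts
open EvenAdd TargetAlgs

variable {I : Type*} [DecidableEq I] (M : CoxeterMatrix I)

private lemma cancel1 {R : Type*} [Ring R] (c q : R) : c * (-1 * q) + c * q = 0 := by
  noncomm_ring

private lemma cancel2 {R : Type*} [Ring R] (c q : R) : c * q + c * -1 * q = 0 := by
  noncomm_ring

private lemma σbar_sq (i : I) : σbar M i * σbar M i = 0 := by
  have := RingQuot.mkAlgHom_rel ℂ (RelBar.sq (M := M) i)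
  simpa [σbar] using this

private lemma σbar_braid (i j : I) (h : i ≠ j) (hm : M i j ≠ 0) :
    altProd (σbar M i) (σbar M j) (M i j)
      = (-1 : A1bar M)^(M i j + 1) * altProd (σbar M j) (σbar M i) (M i j) := by
  have := RingQuot.mkAlgHom_rel ℂ (RelBar.braid (M := M) i j h hm)
  rw [map_altProd, map_mul, map_pow, map_neg, map_one, map_altProd] at this
  exact this

private lemma nilbar (i j : I) (h : i ≠ j) (hm : M i j ≠ 0) :
    (σbar M i - σbar M j) ^ (M i j) = 0 := by
  have hm1 : 1 ≤ M i j := Nat.pos_of_ne_zero hm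
  rw [key2 _ _ (σbar_sq M i) (σbar_sq M j) (M i j) hm1, σbar_braid M i j h hm]
  set m := M i j with hmdef
  rcases Nat.even_or_odd m with ⟨k, hk⟩ | ⟨k, hk⟩
  · have hodd : Odd (m+1) := ⟨k, by omega⟩
    have hneg : ((-1 : A1bar M))^(m+1) = -1 := by
      rw [show m+1 = 2*k+1 from by omega, pow_succ, pow_mul]; norm_num
    rw [show m/2 = k from by omega, show (m+1)/2 = k from by omega, hneg]
    exact cancel1 _ _
  · have hev : Even (m+1) := ⟨k+1, by omega⟩
    have hneg : ((-1 : A1bar M))^(m+1) = 1 := by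
      rw [show m+1 = 2*(k+1) from by omega, pow_mul]; norm_num
    rw [show m/2 = k from by omega, show (m+1)/2 = k+1 from by omega, hneg, one_mul, pow_succ]
    exact cancel2 _ _

private lemma σ1_sq (i : I) : σ1 M i * σ1 M i = 1 := by
  have := RingQuot.mkAlgHom_rel ℂ (Rel1.sq (M := M) i)
  simpa [σ1] using this

private lemma nil1 (i j : I) (h : i ≠ j) (hm : M i j ≠ 0) :
    (σ1 M i - σ1 M j) ^ (M i j) = 0 := by
  refine key1' _ _ (σ1_sq M i) (σ1_sq M j) _ ?_
  have := RingQuot.mkAlgHom_rel ℂ (Rel1.unip (M := M) i j h hm)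
  simpa [σ1] using this

/-- Generic construction: given a target algebra `B` with elements `t i` such that
`(t i - t j)^(M i j) = 0` whenever `M i j ≠ 0`, there is a unique alg hom sending
`α_{ij}` to `t i - t j`. -/
private lemma exists_unique_hom {B : Type*} [Ring B] [Algebra ℂ B] (t : I → B)
    (hnil : ∀ i j, i ≠ j → M i j ≠ 0 → (t i - t j) ^ (M i j) = 0) :
    ∃! φ : A0 M →ₐ[ℂ] B,
      ∀ (i j : I) (h : i ≠ j), φ (mk M (agen i j h)) = t i - t j := by
  have hrel : ∀ ⦃x y⦄, Rel M x y →
      (FreeAlgebra.lift ℂ fun g : Gens I => t g.1.1 - t g.1.2) x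
        = (FreeAlgebra.lift ℂ fun g : Gens I => t g.1.1 - t g.1.2) y := by
    intro x y r
    induction r with
    | anti i j h => simp [agen]
    | triangle i j k hij hjk hki => simp [agen]
    | nil i j h hm =>
      simp only [map_pow, map_zero, agen, FreeAlgebra.lift_ι_apply]
      exact hnil i j h hm
  refine ⟨RingQuot.liftAlgHom ℂ ⟨_, hrel⟩, ?_, ?_⟩
  · intro i j h
    rw [mk, RingQuot.liftAlgHom_mkAlgHom_apply]
    simp [agen]
  · intro ψ hψ
    apply RingQuot.ringQuot_ext'
    apply FreeAlgebra.hom_ext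
    funext g
    have : FreeAlgebra.ι ℂ g = agen g.1.1 g.1.2 g.2 := rfl
    simp only [Function.comp_apply, AlgHom.coe_comp, this]
    rw [show RingQuot.mkAlgHom ℂ (Rel M) = mk M from rfl, hψ g.1.1 g.1.2 g.2,
      mk, RingQuot.liftAlgHom_mkAlgHom_apply]
    simp [agen]

end Facts

open EvenAdd TargetAlgs in
/-- Proposition 7.3 of Etingof–Rains. -/
theorem proposition_7_3 {I : Type*} [Fintype I] [DecidableEq I] (M : CoxeterMatrix I) :
    (∃! φ0 : A0 M →ₐ[ℂ] A1bar M,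
      ∀ (i j : I) (h : i ≠ j), φ0 (mk M (agen i j h)) = σbar M i - σbar M j) ∧
    (∃! φ : A0 M →ₐ[ℂ] A1 M,
      ∀ (i j : I) (h : i ≠ j), φ (mk M (agen i j h)) = σ1 M i - σ1 M j) :=
  ⟨exists_unique_hom M (σbar M) (nilbar M),
   exists_unique_hom M (σ1 M) (nil1 M)⟩
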